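/- Let w_1, …, w_ℓ be positive integers with ∑_{j∈[ℓ]} w_j = 2t and w_j < t for every j. Construct the fair-division-with-social-impact instance with two agents a_1, a_2 and items g_1, …, g_ℓ, G_1, G_2, G_3, where for both agents v(g_j) = w_j and s(g_j) = 1; for k ∈ {1,2}, v_{a_1}(G_k) = t, s_{a_1}(G_k) = 0, v_{a_2}(G_k) = 0, s_{a_2}(G_k) = 1; and v_{a_1}(G_3) = v_{a_2}(G_3) = t, s_{a_1}(G_3) = s_{a_2}(G_3) = 1. Then this instance admits an allocation that is simultaneously SIM, EF1 for agent a_1, and SA-EF1 for agent a_2 if and only if there exists J ⊆ [ℓ] with ∑_{j∈J} w_j = t. -/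

import Mathlib

open Finset

variable {N M : Type*}

/-- The bundle of agent `i` under allocation `A` (items mapped to `i`). -/
def bundle [Fintype M] [DecidableEq N] (A : M → N) (i : N) : Finset M :=
  Finset.univ.filter fun g => A g = i

/-- The (additive) value of a bundle `S` under the item-values `f`. -/
def val (f : M → ℕ) (S : Finset M) : ℕ := ∑ g ∈ S, f g

/-- An allocation is social impact maximizing (SIM). -/
def SIM [Fintype N] [Fintype M] [DecidableEq N] (s : N → M → ℕ) (A : M → N) : Prop :=
  ∀ A' : M → N, ∑ i : N, val (s i) (bundle A i) ≥ ∑ i : N, val (s i) (bundle A' i)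

/-- The allocation `A` is EF1 for agent `i`. -/
def EF1for [Fintype M] [DecidableEq N] [DecidableEq M]
    (v : N → M → ℕ) (A : M → N) (i : N) : Prop :=
  ∀ j : N, ∃ g : M, val (v i) (bundle A i) ≥ val (v i) ((bundle A j).erase g)

/-- The allocation `A` is SA-EF1 for agent `i`. -/
def SAEF1for [Fintype M] [DecidableEq N] [DecidableEq M]
    (v s : N → M → ℕ) (A : M → N) (i : N) : Prop :=
  ∀ j : N,
    (∃ g : M, val (v i) (bundle A i) ≥ val (v i) ((bundle A j).erase g)) ∨
    val (s i) (bundle A j) < val (s j) (bundle A j)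

/-!
SIM forces `G₁` and `G₂` to `a₂`, and then both agents have the same social impact on `a₁`'s
bundle, so SA-EF1 for `a₂` is plain EF1 towards `a₁`. Let `T₁, T₂` be the weights of the items
`g_j` received by `a₁, a₂`, so `T₁ + T₂ = 2t`, and note that no single item is worth more than
`t`. If `G₃` goes to `a₁`, EF1 for `a₁` gives `T₂ ≤ T₁` and EF1 for `a₂` gives `T₁ ≤ T₂`, so
`a₁`'s items `g_j` weigh exactly `t`. If `G₃` goes to `a₂`, EF1 for `a₁` forces `T₁ = 2t`, and
then `a₂` envies `a₁` by `t`, which removing one item of weight `< t` cannot repair. Conversely,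
giving `a₁` the items of a half `J` together with `G₃` satisfies all three conditions.
-/

lemma mem_bundle [Fintype M] [DecidableEq N] {A : M → N} {i : N} {g : M} :
    g ∈ bundle A i ↔ A g = i := by
  simp [bundle]

lemma val_bundle_eq_sum_ite [Fintype M] [DecidableEq N] (f : M → ℕ) (A : M → N) (i : N) :
    val f (bundle A i) = ∑ g, if A g = i then f g else 0 := by
  simp [_root_.val, bundle, Finset.sum_filter]

lemma sum_val_bundle [Fintype N] [Fintype M] [DecidableEq N] (s : N → M → ℕ) (A : M → N) :
    ∑ i, val (s i) (bundle A i) = ∑ g, s (A g) g := by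
  simp only [val_bundle_eq_sum_ite]
  rw [Finset.sum_comm]
  simp

lemma val_bundle_sum_elim {α β : Type*} [Fintype α] [Fintype β] [DecidableEq N]
    (f : α ⊕ β → ℕ) (A : α ⊕ β → N) (i : N) :
    val f (bundle A i) =
      val (f ∘ Sum.inl) (bundle (A ∘ Sum.inl) i) + val (f ∘ Sum.inr) (bundle (A ∘ Sum.inr) i) := by
  simp only [val_bundle_eq_sum_ite, Fintype.sum_sum_type, Function.comp_apply]

lemma val_eq_val_erase_add [DecidableEq M] (f : M → ℕ) (S : Finset M) (g : M) :
    val f S = val f (S.erase g) + if g ∈ S then f g else 0 := by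
  split_ifs with h
  · exact (Finset.sum_erase_add S f h).symm
  · rw [Finset.erase_eq_of_notMem h, add_zero]

lemma val_erase_add_of_mem [DecidableEq M] (f : M → ℕ) {S : Finset M} {g : M} (hg : g ∈ S) :
    val f (S.erase g) + f g = val f S :=
  Finset.sum_erase_add S f hg

lemma val_le_val_erase_add [DecidableEq M] (f : M → ℕ) (S : Finset M) (g : M) :
    val f S ≤ val f (S.erase g) + f g := by
  rw [val_eq_val_erase_add f S g]
  split_ifs <;> omega

lemma val_erase_le [DecidableEq M] (f : M → ℕ) (S : Finset M) (g : M) :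
    val f (S.erase g) ≤ val f S :=
  Finset.sum_le_sum_of_subset (Finset.erase_subset g S)

theorem sim_iff_forall_le [Fintype N] [Fintype M] [DecidableEq N] {s : N → M → ℕ} {A : M → N} :
    SIM s A ↔ ∀ g i, s i g ≤ s (A g) g := by
  classical
  constructor
  · intro hsim g i
    by_contra! hlt
    refine (hsim (Function.update A g i)).not_gt ?_
    rw [sum_val_bundle, sum_val_bundle]
    refine Finset.sum_lt_sum (fun g' _ => ?_) ⟨g, Finset.mem_univ g, by simpa using hlt⟩
    obtain rfl | hne := eq_or_ne g' g
    · simpa using hlt.le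
    · simp [Function.update_of_ne hne]
  · intro hle A'
    rw [ge_iff_le, sum_val_bundle, sum_val_bundle]
    exact Finset.sum_le_sum fun g _ => hle g (A' g)

namespace PartitionInstance

variable {ℓ t : ℕ} {w : Fin ℓ → ℕ}

/- Agent `0` is `a₁` and agent `1` is `a₂`; item `Sum.inl j` is `g_j` and `Sum.inr k` is
`G_{k+1}`. -/
def value (t : ℕ) (w : Fin ℓ → ℕ) (i : Fin 2) : Fin ℓ ⊕ Fin 3 → ℕ :=
  Sum.elim (fun j => w j) (fun k => if k = 2 then t else (if i = 0 then t else 0))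

def impact (ℓ : ℕ) (i : Fin 2) : Fin ℓ ⊕ Fin 3 → ℕ :=
  Sum.elim (fun _ => 1) (fun k => if k = 2 then 1 else (if i = 0 then 0 else 1))

lemma value_comp_inl (i : Fin 2) : value t w i ∘ Sum.inl = w := rfl

lemma value_le (hwt : ∀ j, w j < t) (i : Fin 2) (g : Fin ℓ ⊕ Fin 3) : value t w i g ≤ t := by
  rcases g with j | k
  · exact (hwt j).le
  · simp only [value, Sum.elim_inr]; split_ifs <;> omega

lemma sim_iff {A : Fin ℓ ⊕ Fin 3 → Fin 2} :
    SIM (impact ℓ) A ↔ A (Sum.inr 0) = 1 ∧ A (Sum.inr 1) = 1 := by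
  rw [sim_iff_forall_le]
  constructor
  · intro h
    have forced (k : Fin 3) (hk : k ≠ 2) : A (Sum.inr k) = 1 :=
      Fin.eq_one_of_ne_zero _ fun h0 => by simpa [impact, hk, h0] using h (Sum.inr k) 1
    exact ⟨forced 0 (by decide), forced 1 (by decide)⟩
  · rintro ⟨h0, h1⟩ g i
    rcases g with j | k
    · simp [impact]
    · fin_cases k <;> fin_cases i <;> simp [impact, h0, h1]

lemma val_value_bundle {A : Fin ℓ ⊕ Fin 3 → Fin 2} (h0 : A (Sum.inr 0) = 1) (h1 : A (Sum.inr 1) = 1)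
    (i j : Fin 2) :
    val (value t w i) (bundle A j) = val w (bundle (A ∘ Sum.inl) j)
      + (if A (Sum.inr 2) = j then t else 0) + (if i = 0 ∧ j = 1 then 2 * t else 0) := by
  rw [val_bundle_sum_elim, value_comp_inl, val_bundle_eq_sum_ite (value t w i ∘ Sum.inr),
    Fin.sum_univ_three]
  simp only [Function.comp_apply, h0, h1, value, Sum.elim_inr]
  fin_cases i <;> fin_cases j <;> simp +decide only [if_true, if_false] <;> omega

lemma val_impact_one_bundle_zero {A : Fin ℓ ⊕ Fin 3 → Fin 2} (h0 : A (Sum.inr 0) = 1)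
    (h1 : A (Sum.inr 1) = 1) :
    val (impact ℓ 1) (bundle A 0) = val (impact ℓ 0) (bundle A 0) := by
  refine Finset.sum_congr rfl fun g hg => ?_
  rw [mem_bundle] at hg
  rcases g with j | k
  · rfl
  · fin_cases k <;> simp_all [impact]

theorem exists_sum_eq_of_sim_ef1_saef1 (hsum : ∑ j, w j = 2 * t) (hwt : ∀ j, w j < t)
    {A : Fin ℓ ⊕ Fin 3 → Fin 2} (hsim : SIM (impact ℓ) A) (hef1 : EF1for (value t w) A 0)
    (hsa : SAEF1for (value t w) (impact ℓ) A 1) :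
    ∃ J : Finset (Fin ℓ), ∑ j ∈ J, w j = t := by
  obtain rfl | ht := eq_or_ne t 0
  · exact ⟨∅, rfl⟩
  obtain ⟨h0, h1⟩ := sim_iff.mp hsim
  have hsplit : val w (bundle (A ∘ Sum.inl) 0) + val w (bundle (A ∘ Sum.inl) 1) = 2 * t := by
    rw [← hsum, ← sum_val_bundle (N := Fin 2) (fun _ => w), Fin.sum_univ_two]
  obtain ⟨g₁, hg₁⟩ := hef1 1
  have hef1_bound := (val_le_val_erase_add (value t w 0) (bundle A 1) g₁).trans
    (Nat.add_le_add hg₁ (value_le hwt 0 g₁))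
  obtain ⟨g, hg⟩ := (hsa 0).resolve_right (val_impact_one_bundle_zero h0 h1).not_lt
  have hsa_split := val_eq_val_erase_add (value t w 1) (bundle A 0) g
  refine ⟨bundle (A ∘ Sum.inl) 0, ?_⟩
  show val w _ = t
  by_cases h2 : A (Sum.inr 2) = 0
  · have hle : (if g ∈ bundle A 0 then value t w 1 g else 0) ≤ t := by
      split_ifs
      exacts [value_le hwt 1 g, Nat.zero_le t]
    simp +decide only [val_value_bundle h0 h1, h2, if_true, if_false] at hef1_bound hsa_split hg
    omega
  · replace h2 := Fin.eq_one_of_ne_zero _ h2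
    have hlt : (if g ∈ bundle A 0 then value t w 1 g else 0) < t := by
      split_ifs with hmem
      · rw [mem_bundle] at hmem
        rcases g with j | k
        · exact hwt j
        · fin_cases k <;> simp_all
      · exact Nat.pos_of_ne_zero ht
    simp +decide only [val_value_bundle h0 h1, h2, if_true, if_false] at hef1_bound hsa_split hg
    omega

section Allocation

variable (J : Finset (Fin ℓ))

def partitionAllocation : Fin ℓ ⊕ Fin 3 → Fin 2 :=
  Sum.elim (fun j => if j ∈ J then 0 else 1) (fun k => if k = 2 then 0 else 1)

lemma partitionAllocation_inr_zero : partitionAllocation J (Sum.inr 0) = 1 := rfl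
lemma partitionAllocation_inr_two : partitionAllocation J (Sum.inr 2) = 0 := rfl

theorem sim_partitionAllocation : SIM (impact ℓ) (partitionAllocation J) :=
  sim_iff.mpr ⟨rfl, rfl⟩

variable {J}

lemma val_bundle_partitionAllocation_inl (hsum : ∑ j, w j = 2 * t) (hJ : ∑ j ∈ J, w j = t)
    (i : Fin 2) : val w (bundle (partitionAllocation J ∘ Sum.inl) i) = t := by
  have hJ' : val w (bundle (partitionAllocation J ∘ Sum.inl) 0) = t := by
    rw [← hJ]
    congr 1
    ext j
    by_cases hj : j ∈ J <;> simp [mem_bundle, partitionAllocation, hj]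
  have hsplit := sum_val_bundle (N := Fin 2) (fun _ => w) (partitionAllocation J ∘ Sum.inl)
  rw [Fin.sum_univ_two, hsum] at hsplit
  revert i
  exact Fin.forall_fin_two.mpr ⟨hJ', by omega⟩

lemma val_bundle_partitionAllocation (hsum : ∑ j, w j = 2 * t) (hJ : ∑ j ∈ J, w j = t)
    (i j : Fin 2) : val (value t w i) (bundle (partitionAllocation J) j) =
      t + (if 0 = j then t else 0) + (if i = 0 ∧ j = 1 then 2 * t else 0) := by
  rw [val_value_bundle rfl rfl, val_bundle_partitionAllocation_inl hsum hJ,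
    partitionAllocation_inr_two]

theorem ef1for_partitionAllocation (hsum : ∑ j, w j = 2 * t) (hJ : ∑ j ∈ J, w j = t) :
    EF1for (value t w) (partitionAllocation J) 0 := by
  have hsplit :=
    val_erase_add_of_mem (value t w 0) (mem_bundle.mpr (partitionAllocation_inr_zero J))
  have hG : value t w 0 (Sum.inr 0) = t := rfl
  refine Fin.forall_fin_two.mpr ⟨⟨Sum.inr 0, val_erase_le _ _ _⟩, ⟨Sum.inr 0, ?_⟩⟩
  simp +decide only [val_bundle_partitionAllocation hsum hJ, if_true, if_false] at hsplit ⊢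
  omega

theorem saef1for_partitionAllocation (hsum : ∑ j, w j = 2 * t) (hJ : ∑ j ∈ J, w j = t) :
    SAEF1for (value t w) (impact ℓ) (partitionAllocation J) 1 := by
  have hsplit :=
    val_erase_add_of_mem (value t w 1) (mem_bundle.mpr (partitionAllocation_inr_two J))
  have hG : value t w 1 (Sum.inr 2) = t := rfl
  refine Fin.forall_fin_two.mpr ⟨.inl ⟨Sum.inr 2, ?_⟩, .inl ⟨Sum.inr 2, val_erase_le _ _ _⟩⟩
  simp +decide only [val_bundle_partitionAllocation hsum hJ, if_true, if_false] at hsplit ⊢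
  omega

end Allocation

end PartitionInstance

theorem sim_ef1_saef1_iff_partition_general (ℓ t : ℕ) (w : Fin ℓ → ℕ)
    (hsum : ∑ j, w j = 2 * t) (hwt : ∀ j, w j < t) :
    (∃ A : (Fin ℓ ⊕ Fin 3) → Fin 2,
        SIM (fun i : Fin 2 => Sum.elim (fun _ : Fin ℓ => 1)
          (fun k : Fin 3 => if k = 2 then 1 else (if i = 0 then 0 else 1))) A ∧
        EF1for (fun i : Fin 2 => Sum.elim (fun j : Fin ℓ => w j)
          (fun k : Fin 3 => if k = 2 then t else (if i = 0 then t else 0))) A 0 ∧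
        SAEF1for (fun i : Fin 2 => Sum.elim (fun j : Fin ℓ => w j)
          (fun k : Fin 3 => if k = 2 then t else (if i = 0 then t else 0)))
          (fun i : Fin 2 => Sum.elim (fun _ : Fin ℓ => 1)
          (fun k : Fin 3 => if k = 2 then 1 else (if i = 0 then 0 else 1))) A 1) ↔
    (∃ J : Finset (Fin ℓ), ∑ j ∈ J, w j = t) :=
  ⟨fun ⟨_, hsim, hef1, hsa⟩ =>
      PartitionInstance.exists_sum_eq_of_sim_ef1_saef1 hsum hwt hsim hef1 hsa,
    fun ⟨J, hJ⟩ => ⟨PartitionInstance.partitionAllocation J,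
      PartitionInstance.sim_partitionAllocation J,
      PartitionInstance.ef1for_partitionAllocation hsum hJ,
      PartitionInstance.saef1for_partitionAllocation hsum hJ⟩⟩

/-- Partition reduction with one socially unaware agent: two agents `0 = a₁`
(socially unaware), `1 = a₂`; items `Sum.inl j = g_j` (value `w j`, impact `1` for
both) and `Sum.inr k = G_{k+1}` with
`v_{a₁}(G₁) = v_{a₁}(G₂) = t, s_{a₁}(G₁) = s_{a₁}(G₂) = 0`,
`v_{a₂}(G₁) = v_{a₂}(G₂) = 0, s_{a₂}(G₁) = s_{a₂}(G₂) = 1`,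
`v_{a₁}(G₃) = v_{a₂}(G₃) = t, s_{a₁}(G₃) = s_{a₂}(G₃) = 1`.
A SIM allocation that is EF1 for `a₁` and SA-EF1 for `a₂` exists iff `w` can be
partitioned. -/
theorem sim_ef1_saef1_iff_partition (ℓ t : ℕ) (w : Fin ℓ → ℕ)
    (hw : ∀ j, 0 < w j) (hsum : ∑ j, w j = 2 * t) (hwt : ∀ j, w j < t) :
    (∃ A : (Fin ℓ ⊕ Fin 3) → Fin 2,
        SIM (fun i : Fin 2 => Sum.elim (fun _ : Fin ℓ => 1)
          (fun k : Fin 3 => if k = 2 then 1 else (if i = 0 then 0 else 1))) A ∧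
        EF1for (fun i : Fin 2 => Sum.elim (fun j : Fin ℓ => w j)
          (fun k : Fin 3 => if k = 2 then t else (if i = 0 then t else 0))) A 0 ∧
        SAEF1for (fun i : Fin 2 => Sum.elim (fun j : Fin ℓ => w j)
          (fun k : Fin 3 => if k = 2 then t else (if i = 0 then t else 0)))
          (fun i : Fin 2 => Sum.elim (fun _ : Fin ℓ => 1)
          (fun k : Fin 3 => if k = 2 then 1 else (if i = 0 then 0 else 1))) A 1) ↔
    (∃ J : Finset (Fin ℓ), ∑ j ∈ J, w j = t) :=
  sim_ef1_saef1_iff_partition_general ℓ t w hsum hwt
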